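/- arXiv:2302.07807 — 12 statements merged into one kernel-verified Lean document; each statement's English description precedes it below -/
import Mathlib

section
/- T is positively homogeneous: for every real λ > 0 and every u ∈ E, T (λ • u) = λ • T u. -/
open Set

theorem IsMinOn.smul_norm_Ici {𝕜 E : Type*} [NormedField 𝕜] [LinearOrder 𝕜]
    [IsStrictOrderedRing 𝕜] [NormedAddCommGroup E] [NormedSpace 𝕜 E] [PartialOrder E]
    [PosSMulMono 𝕜 E] {u m : E} (hm : IsMinOn (‖·‖) (Ici u) m) {c : 𝕜} (hc : 0 < c) :
    IsMinOn (‖·‖) (Ici (c • u)) (c • m) := by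
  intro v hv
  have hv' : c⁻¹ • v ∈ Ici u := by
    rw [mem_Ici, ← smul_le_smul_iff_of_pos_left hc, smul_inv_smul₀ hc.ne']
    exact hv
  calc ‖c • m‖ = ‖c‖ * ‖m‖ := norm_smul c m
    _ ≤ ‖c‖ * ‖c⁻¹ • v‖ := by gcongr; exact hm hv'
    _ = ‖v‖ := by rw [← norm_smul, smul_inv_smul₀ hc.ne']

/-- The obstacle solution map `T` is positively homogeneous:
`T (λ • u) = λ • T u` for every `λ > 0`. -/
theorem obstacle_map_pos_homogeneous
    {E : Type*} [NormedAddCommGroup E] [InnerProductSpace ℝ E] [PartialOrder E]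
    (hadd : ∀ x y z : E, x ≤ y → x + z ≤ y + z)
    (hsmul : ∀ (c : ℝ) (x : E), 0 ≤ x → 0 ≤ c → 0 ≤ c • x)
    (T : E → E)
    (hTle : ∀ u : E, u ≤ T u)
    (hTmin : ∀ u v : E, u ≤ v → ‖T u‖ ≤ ‖v‖)
    (hTuniq : ∀ u m : E, u ≤ m → (∀ v : E, u ≤ v → ‖m‖ ≤ ‖v‖) → m = T u) :
    ∀ (l : ℝ), 0 < l → ∀ u : E, T (l • u) = l • T u := by
  have : IsOrderedAddMonoid E := { add_le_add_left := fun x y hxy z => hadd x y z hxy }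
  have : PosSMulMono ℝ E := .of_smul_nonneg fun c hc x hx => hsmul c x hx hc
  intro l hl u
  have hTu : IsMinOn (‖·‖) (Ici u) (T u) := fun v hv => hTmin u v hv
  exact (hTuniq _ _ (smul_le_smul_of_nonneg_left (hTle u) hl.le) (hTu.smul_norm_Ici hl)).symm
end

section
/- For every u ∈ E, T_F (Φ u) = Φ (T_E u). -/
def IsObstacleSolution {E : Type*} [Norm E] [LE E] (u m : E) : Prop :=
  u ≤ m ∧ ∀ v, u ≤ v → ‖m‖ ≤ ‖v‖

/-- Surjectivity lets every competitor `v ≥ Φ u` be pulled back to a competitor `w ≥ u`. -/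
theorem IsObstacleSolution.map {E F : Type*} [Norm E] [LE E] [Norm F] [LE F] {Φ : E → F}
    (hsurj : Function.Surjective Φ) (hnorm : ∀ x, ‖Φ x‖ = ‖x‖)
    (hle : ∀ x y, x ≤ y ↔ Φ x ≤ Φ y) {u m : E} (h : IsObstacleSolution u m) :
    IsObstacleSolution (Φ u) (Φ m) := by
  refine ⟨(hle u m).mp h.1, ?_⟩
  rintro v hv
  obtain ⟨w, rfl⟩ := hsurj v
  rw [hnorm, hnorm]
  exact h.2 w ((hle u w).mpr hv)

theorem obstacle_map_conformal_transformation_general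
    {E F : Type*} [NormedAddCommGroup E] [InnerProductSpace ℝ E] [PartialOrder E]
    [NormedAddCommGroup F] [InnerProductSpace ℝ F] [PartialOrder F]
    (TE : E → E)
    (hTEle : ∀ u : E, u ≤ TE u)
    (hTEmin : ∀ u v : E, u ≤ v → ‖TE u‖ ≤ ‖v‖)
    (TF : F → F)
    (hTFuniq : ∀ u m : F, u ≤ m → (∀ v : F, u ≤ v → ‖m‖ ≤ ‖v‖) → m = TF u)
    (Φ : E →ₗ[ℝ] F)
    (hbij : Function.Bijective Φ)
    (hiso : ∀ x : E, ‖Φ x‖ = ‖x‖)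
    (horder : ∀ x y : E, x ≤ y ↔ Φ x ≤ Φ y) :
    ∀ u : E, TF (Φ u) = Φ (TE u) := by
  intro u
  have hTE : IsObstacleSolution u (TE u) := ⟨hTEle u, hTEmin u⟩
  obtain ⟨hle, hmin⟩ := hTE.map hbij.2 hiso horder
  exact (hTFuniq _ _ hle hmin).symm

/-- The obstacle solution maps commute with a linear isometric order isomorphism:
`T_F (Φ u) = Φ (T_E u)`. -/
theorem obstacle_map_conformal_transformation
    {E F : Type*} [NormedAddCommGroup E] [InnerProductSpace ℝ E] [PartialOrder E]
    [NormedAddCommGroup F] [InnerProductSpace ℝ F] [PartialOrder F]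
    (haddE : ∀ x y z : E, x ≤ y → x + z ≤ y + z)
    (hsmulE : ∀ (c : ℝ) (x : E), 0 ≤ x → 0 ≤ c → 0 ≤ c • x)
    (haddF : ∀ x y z : F, x ≤ y → x + z ≤ y + z)
    (hsmulF : ∀ (c : ℝ) (x : F), 0 ≤ x → 0 ≤ c → 0 ≤ c • x)
    (TE : E → E)
    (hTEle : ∀ u : E, u ≤ TE u)
    (hTEmin : ∀ u v : E, u ≤ v → ‖TE u‖ ≤ ‖v‖)
    (hTEuniq : ∀ u m : E, u ≤ m → (∀ v : E, u ≤ v → ‖m‖ ≤ ‖v‖) → m = TE u)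
    (TF : F → F)
    (hTFle : ∀ u : F, u ≤ TF u)
    (hTFmin : ∀ u v : F, u ≤ v → ‖TF u‖ ≤ ‖v‖)
    (hTFuniq : ∀ u m : F, u ≤ m → (∀ v : F, u ≤ v → ‖m‖ ≤ ‖v‖) → m = TF u)
    (Φ : E →ₗ[ℝ] F)
    (hbij : Function.Bijective Φ)
    (hiso : ∀ x : E, ‖Φ x‖ = ‖x‖)
    (horder : ∀ x y : E, x ≤ y ↔ Φ x ≤ Φ y) :
    ∀ u : E, TF (Φ u) = Φ (TE u) :=
  obstacle_map_conformal_transformation_general TE hTEle hTEmin TF hTFuniq Φ hbij hiso horder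
end

section
/- Monotonicity formula for J: for every u ∈ E with 0 < u, J(u) − J(T u) ≥ (‖u‖² − ‖T u‖²) / N(T u)², and (‖u‖² − ‖T u‖²) / N(T u)² ≥ 0. -/
lemma sub_div_le_div_sub_div {a b n m : ℝ} (ha : 0 ≤ a) (hn : 0 < n) (hnm : n ≤ m) :
    (a - b) / m ≤ a / n - b / m := by
  rw [sub_div]
  gcongr

theorem yamabe_functional_monotonicity_general
    {E : Type*} [NormedAddCommGroup E] [PartialOrder E]
    (T : E → E)
    (hTle : ∀ u : E, u ≤ T u)
    (hTmin : ∀ u v : E, u ≤ v → ‖T u‖ ≤ ‖v‖)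
    (N : E → ℝ)
    (hNpos : ∀ u : E, 0 < u → 0 < N u)
    (hNmono : ∀ u v : E, 0 < u → u ≤ v → N u ≤ N v) :
    ∀ u : E, 0 < u →
      ‖u‖ ^ 2 / N u ^ 2 - ‖T u‖ ^ 2 / N (T u) ^ 2 ≥
          (‖u‖ ^ 2 - ‖T u‖ ^ 2) / N (T u) ^ 2 ∧
        (‖u‖ ^ 2 - ‖T u‖ ^ 2) / N (T u) ^ 2 ≥ 0 := by
  intro u hu
  have hNu : 0 < N u := hNpos u hu
  have hN_le : N u ^ 2 ≤ N (T u) ^ 2 := by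
    gcongr
    exact hNmono u (T u) hu (hTle u)
  have hnorm_le : ‖T u‖ ^ 2 ≤ ‖u‖ ^ 2 := by
    gcongr
    exact hTmin u u le_rfl
  exact ⟨sub_div_le_div_sub_div (by positivity) (by positivity) hN_le,
    div_nonneg (sub_nonneg.2 hnorm_le) (sq_nonneg _)⟩

/-- Monotonicity formula for the Yamabe functional `J u = ‖u‖² / N u²`. -/
theorem yamabe_functional_monotonicity
    {E : Type*} [NormedAddCommGroup E] [InnerProductSpace ℝ E] [PartialOrder E]
    (hadd : ∀ x y z : E, x ≤ y → x + z ≤ y + z)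
    (hsmul : ∀ (c : ℝ) (x : E), 0 ≤ x → 0 ≤ c → 0 ≤ c • x)
    (T : E → E)
    (hTle : ∀ u : E, u ≤ T u)
    (hTmin : ∀ u v : E, u ≤ v → ‖T u‖ ≤ ‖v‖)
    (hTuniq : ∀ u m : E, u ≤ m → (∀ v : E, u ≤ v → ‖m‖ ≤ ‖v‖) → m = T u)
    (N : E → ℝ)
    (hNpos : ∀ u : E, 0 < u → 0 < N u)
    (hNmono : ∀ u v : E, 0 < u → u ≤ v → N u ≤ N v) :
    ∀ u : E, 0 < u →
      ‖u‖ ^ 2 / N u ^ 2 - ‖T u‖ ^ 2 / N (T u) ^ 2 ≥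
          (‖u‖ ^ 2 - ‖T u‖ ^ 2) / N (T u) ^ 2 ∧
        (‖u‖ ^ 2 - ‖T u‖ ^ 2) / N (T u) ^ 2 ≥ 0 :=
  yamabe_functional_monotonicity_general T hTle hTmin N hNpos hNmono
end

section
/- Rigidity for J: for every u ∈ E with 0 < u, J(T u) ≤ J(u); moreover, if J(u) = J(T u) then T u = u. -/
/-!
Testing the minimality of `T u` against `v = u` gives `‖T u‖ ≤ ‖u‖`, while `u ≤ T u` and the
monotonicity of `N` give `N u ≤ N (T u)`; hence `J (T u) ≤ J u`. If equality holds, both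
comparisons are equalities, so `‖u‖ = ‖T u‖` and `u` itself minimises the norm over `{v | u ≤ v}`;
uniqueness of the minimiser then forces `T u = u`.
-/

lemma div_sq_le_div_sq {a a' b b' : ℝ} (ha' : 0 ≤ a') (haa' : a' ≤ a) (hb : 0 < b)
    (hbb' : b ≤ b') : a' ^ 2 / b' ^ 2 ≤ a ^ 2 / b ^ 2 :=
  div_le_div₀ (by positivity) (by gcongr) (by positivity) (by gcongr)

lemma le_of_div_sq_eq_div_sq {a a' b b' : ℝ} (ha' : 0 ≤ a') (hb : 0 < b) (hbb' : b ≤ b')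
    (h : a ^ 2 / b ^ 2 = a' ^ 2 / b' ^ 2) : a ≤ a' := by
  have hsq : a ^ 2 / b ^ 2 ≤ a' ^ 2 / b ^ 2 :=
    calc a ^ 2 / b ^ 2 = a' ^ 2 / b' ^ 2 := h
      _ ≤ a' ^ 2 / b ^ 2 := by gcongr
  exact abs_le_of_sq_le_sq' ((div_le_div_iff_of_pos_right (by positivity)).mp hsq) ha' |>.2

section ObstacleMap

variable {E : Type*} [NormedAddCommGroup E] [PartialOrder E] {T : E → E}

lemma norm_obstacle_le (hTmin : ∀ u v : E, u ≤ v → ‖T u‖ ≤ ‖v‖) (u : E) : ‖T u‖ ≤ ‖u‖ :=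
  hTmin u u le_rfl

lemma obstacle_eq_self_of_norm_le (hTmin : ∀ u v : E, u ≤ v → ‖T u‖ ≤ ‖v‖)
    (hTuniq : ∀ u m : E, u ≤ m → (∀ v : E, u ≤ v → ‖m‖ ≤ ‖v‖) → m = T u) {u : E}
    (h : ‖u‖ ≤ ‖T u‖) : T u = u :=
  (hTuniq u u le_rfl fun v hv => h.trans (hTmin u v hv)).symm

end ObstacleMap

theorem yamabe_functional_rigidity_general
    {E : Type*} [NormedAddCommGroup E] [PartialOrder E]
    (T : E → E)
    (hTle : ∀ u : E, u ≤ T u)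
    (hTmin : ∀ u v : E, u ≤ v → ‖T u‖ ≤ ‖v‖)
    (hTuniq : ∀ u m : E, u ≤ m → (∀ v : E, u ≤ v → ‖m‖ ≤ ‖v‖) → m = T u)
    (N : E → ℝ)
    (hNpos : ∀ u : E, 0 < u → 0 < N u)
    (hNmono : ∀ u v : E, 0 < u → u ≤ v → N u ≤ N v) :
    ∀ u : E, 0 < u →
      ‖T u‖ ^ 2 / N (T u) ^ 2 ≤ ‖u‖ ^ 2 / N u ^ 2 ∧
        (‖u‖ ^ 2 / N u ^ 2 = ‖T u‖ ^ 2 / N (T u) ^ 2 → T u = u) := by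
  intro u hu
  have hN : N u ≤ N (T u) := hNmono u (T u) hu (hTle u)
  refine ⟨div_sq_le_div_sq (norm_nonneg _) (norm_obstacle_le hTmin u) (hNpos u hu) hN,
    fun hJ => ?_⟩
  exact obstacle_eq_self_of_norm_le hTmin hTuniq
    (le_of_div_sq_eq_div_sq (norm_nonneg _) (hNpos u hu) hN hJ)

/-- Rigidity for the Yamabe functional `J u = ‖u‖² / N u²`:
`J (T u) ≤ J u` and equality forces `T u = u`. -/
theorem yamabe_functional_rigidity
    {E : Type*} [NormedAddCommGroup E] [InnerProductSpace ℝ E] [PartialOrder E]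
    (hadd : ∀ x y z : E, x ≤ y → x + z ≤ y + z)
    (hsmul : ∀ (c : ℝ) (x : E), 0 ≤ x → 0 ≤ c → 0 ≤ c • x)
    (T : E → E)
    (hTle : ∀ u : E, u ≤ T u)
    (hTmin : ∀ u v : E, u ≤ v → ‖T u‖ ≤ ‖v‖)
    (hTuniq : ∀ u m : E, u ≤ m → (∀ v : E, u ≤ v → ‖m‖ ≤ ‖v‖) → m = T u)
    (N : E → ℝ)
    (hNpos : ∀ u : E, 0 < u → 0 < N u)
    (hNmono : ∀ u v : E, 0 < u → u ≤ v → N u ≤ N v) :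
    ∀ u : E, 0 < u →
      ‖T u‖ ^ 2 / N (T u) ^ 2 ≤ ‖u‖ ^ 2 / N u ^ 2 ∧
        (‖u‖ ^ 2 / N u ^ 2 = ‖T u‖ ^ 2 / N (T u) ^ 2 → T u = u) :=
  yamabe_functional_rigidity_general T hTle hTmin hTuniq N hNpos hNmono
end

section
/- Minimizers of J are fixed points of T: if u ∈ E with 0 < u satisfies J(u) = ⨅ {J(v) : v ∈ E, 0 < v}, then T u = u. -/
/-!
If some `v ≥ u` had smaller norm than the minimizer `u`, then `N v ≥ N u` would give
`J v < J u`. So `u` is itself a least-norm element above `u`, and uniqueness of the obstacle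
solution forces `u = T u`.
-/

theorem sq_div_sq_lt_sq_div_sq {a b c d : ℝ} (hb : 0 ≤ b) (hba : b < a) (hc : 0 < c)
    (hcd : c ≤ d) : b ^ 2 / d ^ 2 < a ^ 2 / c ^ 2 :=
  calc b ^ 2 / d ^ 2 ≤ b ^ 2 / c ^ 2 := by gcongr
    _ < a ^ 2 / c ^ 2 := by gcongr

theorem norm_le_of_le_of_eq_sInf_quotient {E : Type*} [NormedAddCommGroup E] [Preorder E]
    {N : E → ℝ} (hNpos : ∀ u : E, 0 < u → 0 < N u)
    (hNmono : ∀ u v : E, 0 < u → u ≤ v → N u ≤ N v) {u v : E} (hu : 0 < u) (huv : u ≤ v)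
    (hmin : ‖u‖ ^ 2 / N u ^ 2 = sInf {r : ℝ | ∃ w : E, 0 < w ∧ r = ‖w‖ ^ 2 / N w ^ 2}) :
    ‖u‖ ≤ ‖v‖ := by
  by_contra! hvu
  have hbdd : BddBelow {r : ℝ | ∃ w : E, 0 < w ∧ r = ‖w‖ ^ 2 / N w ^ 2} :=
    ⟨0, by rintro _ ⟨w, -, rfl⟩; positivity⟩
  have hle : ‖u‖ ^ 2 / N u ^ 2 ≤ ‖v‖ ^ 2 / N v ^ 2 :=
    hmin ▸ csInf_le hbdd ⟨v, hu.trans_le huv, rfl⟩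
  exact hle.not_gt
    (sq_div_sq_lt_sq_div_sq (norm_nonneg v) hvu (hNpos u hu) (hNmono u v hu huv))

theorem yamabe_minimizer_is_fixed_point_general
    {E : Type*} [NormedAddCommGroup E] [PartialOrder E]
    (T : E → E)
    (hTuniq : ∀ u m : E, u ≤ m → (∀ v : E, u ≤ v → ‖m‖ ≤ ‖v‖) → m = T u)
    (N : E → ℝ)
    (hNpos : ∀ u : E, 0 < u → 0 < N u)
    (hNmono : ∀ u v : E, 0 < u → u ≤ v → N u ≤ N v) :
    ∀ u : E, 0 < u →
      ‖u‖ ^ 2 / N u ^ 2 = sInf {r : ℝ | ∃ v : E, 0 < v ∧ r = ‖v‖ ^ 2 / N v ^ 2} →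
      T u = u := by
  intro u hu hmin
  exact (hTuniq u u le_rfl fun v huv =>
    norm_le_of_le_of_eq_sInf_quotient hNpos hNmono hu huv hmin).symm

/-- Minimizers of the Yamabe functional `J u = ‖u‖² / N u²` over the positive
cone are fixed points of `T`. -/
theorem yamabe_minimizer_is_fixed_point
    {E : Type*} [NormedAddCommGroup E] [InnerProductSpace ℝ E] [PartialOrder E]
    (hadd : ∀ x y z : E, x ≤ y → x + z ≤ y + z)
    (hsmul : ∀ (c : ℝ) (x : E), 0 ≤ x → 0 ≤ c → 0 ≤ c • x)
    (T : E → E)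
    (hTle : ∀ u : E, u ≤ T u)
    (hTmin : ∀ u v : E, u ≤ v → ‖T u‖ ≤ ‖v‖)
    (hTuniq : ∀ u m : E, u ≤ m → (∀ v : E, u ≤ v → ‖m‖ ≤ ‖v‖) → m = T u)
    (N : E → ℝ)
    (hNpos : ∀ u : E, 0 < u → 0 < N u)
    (hNmono : ∀ u v : E, 0 < u → u ≤ v → N u ≤ N v) :
    ∀ u : E, 0 < u →
      ‖u‖ ^ 2 / N u ^ 2 = sInf {r : ℝ | ∃ v : E, 0 < v ∧ r = ‖v‖ ^ 2 / N v ^ 2} →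
      T u = u :=
  yamabe_minimizer_is_fixed_point_general T hTuniq N hNpos hNmono
end

section
/- Minimizing sequences can be replaced by fixed points: if (u_l) is a sequence in E with 0 < u_l for every l and J(u_l) converges to m := ⨅ {J(v) : v ∈ E, 0 < v}, then J(T u_l) also converges to m, and T(T u_l) = T u_l for every l. -/
/-! Since `T u ≥ u`, the obstacle solution is no longer than `u` (compare with `v = u`) and,
`N` being monotone on positive elements, has at least the same `N`; hence
`m ≤ J (T u) ≤ J u`, and `J (T u_l) → m` by squeezing. `T (T u) = T u` because `T u` itself
minimizes the norm above the obstacle `T u`: anything above `T u` is above `u`. -/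

section ObstacleMap

variable {E : Type*} [Norm E] [Preorder E] {T : E → E}

theorem obstacle_map_idem (hTle : ∀ u : E, u ≤ T u)
    (hTmin : ∀ u v : E, u ≤ v → ‖T u‖ ≤ ‖v‖)
    (hTuniq : ∀ u m : E, u ≤ m → (∀ v : E, u ≤ v → ‖m‖ ≤ ‖v‖) → m = T u) (u : E) :
    T (T u) = T u :=
  (hTuniq (T u) (T u) le_rfl fun v hv => hTmin u v ((hTle u).trans hv)).symm

end ObstacleMap

theorem sq_div_sq_le_sq_div_sq {a a' b b' : ℝ} (ha' : 0 ≤ a') (ha : a' ≤ a) (hb : 0 < b)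
    (hb' : b ≤ b') : a' ^ 2 / b' ^ 2 ≤ a ^ 2 / b ^ 2 :=
  div_le_div₀ (by positivity) (pow_le_pow_left₀ ha' ha 2) (by positivity)
    (pow_le_pow_left₀ hb.le hb' 2)

section YamabeQuotient

variable {E : Type*} [SeminormedAddGroup E] [Preorder E]

/-- The functional `J` of the paper. -/
noncomputable def yamabeQuotient (N : E → ℝ) (u : E) : ℝ := ‖u‖ ^ 2 / N u ^ 2

variable {N : E → ℝ}

theorem sInf_yamabeQuotient_le {v : E} (hv : 0 < v) :
    sInf {r : ℝ | ∃ w : E, 0 < w ∧ r = yamabeQuotient N w} ≤ yamabeQuotient N v :=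
  csInf_le ⟨0, by rintro r ⟨w, -, rfl⟩; unfold yamabeQuotient; positivity⟩ ⟨v, hv, rfl⟩

theorem yamabeQuotient_obstacle_le {T : E → E} (hTle : ∀ u : E, u ≤ T u)
    (hTmin : ∀ u v : E, u ≤ v → ‖T u‖ ≤ ‖v‖) (hNpos : ∀ u : E, 0 < u → 0 < N u)
    (hNmono : ∀ u v : E, 0 < u → u ≤ v → N u ≤ N v) {u : E} (hu : 0 < u) :
    yamabeQuotient N (T u) ≤ yamabeQuotient N u :=
  sq_div_sq_le_sq_div_sq (norm_nonneg _) (hTmin u u le_rfl) (hNpos u hu)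
    (hNmono u (T u) hu (hTle u))

end YamabeQuotient

theorem yamabe_minimizing_sequence_fixed_points_general
    {E : Type*} [NormedAddCommGroup E] [InnerProductSpace ℝ E] [PartialOrder E]
    (T : E → E)
    (hTle : ∀ u : E, u ≤ T u)
    (hTmin : ∀ u v : E, u ≤ v → ‖T u‖ ≤ ‖v‖)
    (hTuniq : ∀ u m : E, u ≤ m → (∀ v : E, u ≤ v → ‖m‖ ≤ ‖v‖) → m = T u)
    (N : E → ℝ)
    (hNpos : ∀ u : E, 0 < u → 0 < N u)
    (hNmono : ∀ u v : E, 0 < u → u ≤ v → N u ≤ N v) :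
    ∀ u : ℕ → E, (∀ l : ℕ, 0 < u l) →
      Filter.Tendsto (fun l => ‖u l‖ ^ 2 / N (u l) ^ 2) Filter.atTop
        (nhds (sInf {r : ℝ | ∃ v : E, 0 < v ∧ r = ‖v‖ ^ 2 / N v ^ 2})) →
      Filter.Tendsto (fun l => ‖T (u l)‖ ^ 2 / N (T (u l)) ^ 2) Filter.atTop
          (nhds (sInf {r : ℝ | ∃ v : E, 0 < v ∧ r = ‖v‖ ^ 2 / N v ^ 2})) ∧
        ∀ l : ℕ, T (T (u l)) = T (u l) := by
  intro u hu hmin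
  have hTu : ∀ l, 0 < T (u l) := fun l => (hu l).trans_le (hTle (u l))
  refine ⟨?_, fun l => obstacle_map_idem hTle hTmin hTuniq (u l)⟩
  exact tendsto_of_tendsto_of_tendsto_of_le_of_le tendsto_const_nhds hmin
    (fun l => sInf_yamabeQuotient_le (hTu l))
    (fun l => yamabeQuotient_obstacle_le hTle hTmin hNpos hNmono (hu l))

/-- Minimizing sequences of `J u = ‖u‖² / N u²` can be replaced by sequences of
fixed points of `T`: `J (T u_l)` also converges to the infimum, and each `T u_l`
is a fixed point of `T`. -/
theorem yamabe_minimizing_sequence_fixed_points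
    {E : Type*} [NormedAddCommGroup E] [InnerProductSpace ℝ E] [PartialOrder E]
    (hadd : ∀ x y z : E, x ≤ y → x + z ≤ y + z)
    (hsmul : ∀ (c : ℝ) (x : E), 0 ≤ x → 0 ≤ c → 0 ≤ c • x)
    (T : E → E)
    (hTle : ∀ u : E, u ≤ T u)
    (hTmin : ∀ u v : E, u ≤ v → ‖T u‖ ≤ ‖v‖)
    (hTuniq : ∀ u m : E, u ≤ m → (∀ v : E, u ≤ v → ‖m‖ ≤ ‖v‖) → m = T u)
    (N : E → ℝ)
    (hNpos : ∀ u : E, 0 < u → 0 < N u)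
    (hNmono : ∀ u v : E, 0 < u → u ≤ v → N u ≤ N v) :
    ∀ u : ℕ → E, (∀ l : ℕ, 0 < u l) →
      Filter.Tendsto (fun l => ‖u l‖ ^ 2 / N (u l) ^ 2) Filter.atTop
        (nhds (sInf {r : ℝ | ∃ v : E, 0 < v ∧ r = ‖v‖ ^ 2 / N v ^ 2})) →
      Filter.Tendsto (fun l => ‖T (u l)‖ ^ 2 / N (T (u l)) ^ 2) Filter.atTop
          (nhds (sInf {r : ℝ | ∃ v : E, 0 < v ∧ r = ‖v‖ ^ 2 / N v ^ 2})) ∧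
        ∀ l : ℕ, T (T (u l)) = T (u l) :=
  yamabe_minimizing_sequence_fixed_points_general T hTle hTmin hTuniq N hNpos hNmono
end

section
/- Monotonicity formula for I: for every u ∈ E with 0 < u, I(u) − I(T u) = (‖u‖² − ‖T u‖²) / N(T u)², and this quantity is ≥ 0. -/
theorem obstacle_map_idempotent {E : Type*} [Norm E] [Preorder E] (T : E → E)
    (hTle : ∀ u : E, u ≤ T u)
    (hTmin : ∀ u v : E, u ≤ v → ‖T u‖ ≤ ‖v‖)
    (hTuniq : ∀ u m : E, u ≤ m → (∀ v : E, u ≤ v → ‖m‖ ≤ ‖v‖) → m = T u) (u : E) :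
    T (T u) = T u :=
  (hTuniq (T u) (T u) le_rfl fun v hv => hTmin u v ((hTle u).trans hv)).symm

theorem optimal_control_functional_monotonicity_general
    {E : Type*} [NormedAddCommGroup E] [PartialOrder E]
    (T : E → E)
    (hTle : ∀ u : E, u ≤ T u)
    (hTmin : ∀ u v : E, u ≤ v → ‖T u‖ ≤ ‖v‖)
    (hTuniq : ∀ u m : E, u ≤ m → (∀ v : E, u ≤ v → ‖m‖ ≤ ‖v‖) → m = T u)
    (N : E → ℝ) :
    ∀ u : E, 0 < u →
      ‖u‖ ^ 2 / N (T u) ^ 2 - ‖T u‖ ^ 2 / N (T (T u)) ^ 2 =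
          (‖u‖ ^ 2 - ‖T u‖ ^ 2) / N (T u) ^ 2 ∧
        (‖u‖ ^ 2 - ‖T u‖ ^ 2) / N (T u) ^ 2 ≥ 0 := by
  intro u _
  have hnorm : ‖T u‖ ^ 2 ≤ ‖u‖ ^ 2 :=
    pow_le_pow_left₀ (norm_nonneg _) (hTmin u u le_rfl) 2
  refine ⟨?_, div_nonneg (sub_nonneg.2 hnorm) (sq_nonneg _)⟩
  rw [obstacle_map_idempotent T hTle hTmin hTuniq u, sub_div]

/-- Monotonicity formula for the optimal-control functional
`I u = ‖u‖² / N (T u)²`. -/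
theorem optimal_control_functional_monotonicity
    {E : Type*} [NormedAddCommGroup E] [InnerProductSpace ℝ E] [PartialOrder E]
    (hadd : ∀ x y z : E, x ≤ y → x + z ≤ y + z)
    (hsmul : ∀ (c : ℝ) (x : E), 0 ≤ x → 0 ≤ c → 0 ≤ c • x)
    (T : E → E)
    (hTle : ∀ u : E, u ≤ T u)
    (hTmin : ∀ u v : E, u ≤ v → ‖T u‖ ≤ ‖v‖)
    (hTuniq : ∀ u m : E, u ≤ m → (∀ v : E, u ≤ v → ‖m‖ ≤ ‖v‖) → m = T u)
    (N : E → ℝ)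
    (hNpos : ∀ u : E, 0 < u → 0 < N u)
    (hNmono : ∀ u v : E, 0 < u → u ≤ v → N u ≤ N v) :
    ∀ u : E, 0 < u →
      ‖u‖ ^ 2 / N (T u) ^ 2 - ‖T u‖ ^ 2 / N (T (T u)) ^ 2 =
          (‖u‖ ^ 2 - ‖T u‖ ^ 2) / N (T u) ^ 2 ∧
        (‖u‖ ^ 2 - ‖T u‖ ^ 2) / N (T u) ^ 2 ≥ 0 :=
  optimal_control_functional_monotonicity_general T hTle hTmin hTuniq N
end

section
/- Rigidity for I: for every u ∈ E with 0 < u, I(T u) ≤ I(u); moreover, if I(u) = I(T u) then T u = u. -/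
/-!
`T` is idempotent, since `T u` is already a minimal-norm element above `T u`; so `I u` and
`I (T u)` share the denominator `N (T u)²` and only the numerators `‖u‖² ≥ ‖T u‖²` differ.
Equality of the norms makes `u` itself a minimal-norm element above `u`, hence `u = T u` by
uniqueness.
-/

section ObstacleMap

variable {E : Type*} [Norm E] [Preorder E] {T : E → E}

theorem obstacle_map_eq_self_of_norm_eq (hTmin : ∀ u v : E, u ≤ v → ‖T u‖ ≤ ‖v‖)
    (hTuniq : ∀ u m : E, u ≤ m → (∀ v : E, u ≤ v → ‖m‖ ≤ ‖v‖) → m = T u) {u : E}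
    (h : ‖u‖ = ‖T u‖) : T u = u :=
  (hTuniq u u le_rfl fun v hv => h ▸ hTmin u v hv).symm

end ObstacleMap

theorem optimal_control_functional_rigidity_general
    {E : Type*} [NormedAddCommGroup E] [PartialOrder E]
    (T : E → E)
    (hTle : ∀ u : E, u ≤ T u)
    (hTmin : ∀ u v : E, u ≤ v → ‖T u‖ ≤ ‖v‖)
    (hTuniq : ∀ u m : E, u ≤ m → (∀ v : E, u ≤ v → ‖m‖ ≤ ‖v‖) → m = T u)
    (N : E → ℝ)
    (hNpos : ∀ u : E, 0 < u → 0 < N u) :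
    ∀ u : E, 0 < u →
      ‖T u‖ ^ 2 / N (T (T u)) ^ 2 ≤ ‖u‖ ^ 2 / N (T u) ^ 2 ∧
        (‖u‖ ^ 2 / N (T u) ^ 2 = ‖T u‖ ^ 2 / N (T (T u)) ^ 2 → T u = u) := by
  intro u hu
  have hN : N (T u) ^ 2 ≠ 0 := pow_ne_zero 2 (hNpos _ (hu.trans_le (hTle u))).ne'
  rw [obstacle_map_idem hTle hTmin hTuniq u]
  refine ⟨by gcongr; exact hTmin u u le_rfl, fun heq => ?_⟩
  refine obstacle_map_eq_self_of_norm_eq hTmin hTuniq ?_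
  rwa [div_left_inj' hN, pow_left_inj₀ (norm_nonneg _) (norm_nonneg _) two_ne_zero] at heq

/-- Rigidity for the optimal-control functional `I u = ‖u‖² / N (T u)²`:
`I (T u) ≤ I u` and equality forces `T u = u`. -/
theorem optimal_control_functional_rigidity
    {E : Type*} [NormedAddCommGroup E] [InnerProductSpace ℝ E] [PartialOrder E]
    (hadd : ∀ x y z : E, x ≤ y → x + z ≤ y + z)
    (hsmul : ∀ (c : ℝ) (x : E), 0 ≤ x → 0 ≤ c → 0 ≤ c • x)
    (T : E → E)
    (hTle : ∀ u : E, u ≤ T u)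
    (hTmin : ∀ u v : E, u ≤ v → ‖T u‖ ≤ ‖v‖)
    (hTuniq : ∀ u m : E, u ≤ m → (∀ v : E, u ≤ v → ‖m‖ ≤ ‖v‖) → m = T u)
    (N : E → ℝ)
    (hNpos : ∀ u : E, 0 < u → 0 < N u)
    (hNmono : ∀ u v : E, 0 < u → u ≤ v → N u ≤ N v) :
    ∀ u : E, 0 < u →
      ‖T u‖ ^ 2 / N (T (T u)) ^ 2 ≤ ‖u‖ ^ 2 / N (T u) ^ 2 ∧
        (‖u‖ ^ 2 / N (T u) ^ 2 = ‖T u‖ ^ 2 / N (T (T u)) ^ 2 → T u = u) :=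
  optimal_control_functional_rigidity_general T hTle hTmin hTuniq N hNpos
end

section
/- Minimizers of I are fixed points of T: if u ∈ E with 0 < u satisfies I(u) = ⨅ {I(v) : v ∈ E, 0 < v}, then T u = u. -/
/-!
A minimizer `u` can be compared with `T u`, which is again positive and, `T` being idempotent,
satisfies `I (T u) = ‖T u‖² / N (T u)²`. Minimality thus gives `‖u‖ ≤ ‖T u‖`, so `u` itself is a
norm-minimal element above `u`, and uniqueness of the obstacle solution forces `T u = u`.
-/

section ObstacleMap

variable {E : Type*} [Norm E] [Preorder E] {T : E → E}

theorem obstacle_map_eq_self_of_norm_le (hTmin : ∀ u v : E, u ≤ v → ‖T u‖ ≤ ‖v‖)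
    (hTuniq : ∀ u m : E, u ≤ m → (∀ v : E, u ≤ v → ‖m‖ ≤ ‖v‖) → m = T u) {u : E}
    (hu : ‖u‖ ≤ ‖T u‖) : T u = u :=
  (hTuniq u u le_rfl fun v hv => hu.trans (hTmin u v hv)).symm

end ObstacleMap

theorem le_of_eq_sInf_of_nonneg {α : Type*} {P : α → Prop} {f : α → ℝ} (hf : ∀ v, 0 ≤ f v)
    {u : α} (hu : f u = sInf {r : ℝ | ∃ v, P v ∧ r = f v}) {w : α} (hw : P w) : f u ≤ f w :=
  hu ▸ csInf_le ⟨0, by rintro _ ⟨v, -, rfl⟩; exact hf v⟩ ⟨w, hw, rfl⟩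

theorem optimal_control_minimizer_is_fixed_point_general
    {E : Type*} [NormedAddCommGroup E] [PartialOrder E]
    (T : E → E)
    (hTle : ∀ u : E, u ≤ T u)
    (hTmin : ∀ u v : E, u ≤ v → ‖T u‖ ≤ ‖v‖)
    (hTuniq : ∀ u m : E, u ≤ m → (∀ v : E, u ≤ v → ‖m‖ ≤ ‖v‖) → m = T u)
    (N : E → ℝ)
    (hNpos : ∀ u : E, 0 < u → 0 < N u) :
    ∀ u : E, 0 < u →
      ‖u‖ ^ 2 / N (T u) ^ 2 =
          sInf {r : ℝ | ∃ v : E, 0 < v ∧ r = ‖v‖ ^ 2 / N (T v) ^ 2} →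
      T u = u := by
  intro u hu hmin
  have hTu : 0 < T u := hu.trans_le (hTle u)
  have hle : ‖u‖ ^ 2 / N (T u) ^ 2 ≤ ‖T u‖ ^ 2 / N (T u) ^ 2 := by
    simpa only [obstacle_map_idem hTle hTmin hTuniq] using
      le_of_eq_sInf_of_nonneg (fun v => div_nonneg (sq_nonneg ‖v‖) (sq_nonneg (N (T v)))) hmin hTu
  have hsq : ‖u‖ ^ 2 ≤ ‖T u‖ ^ 2 :=
    (div_le_div_iff_of_pos_right (pow_pos (hNpos _ hTu) 2)).mp hle
  exact obstacle_map_eq_self_of_norm_le hTmin hTuniq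
    ((pow_le_pow_iff_left₀ (norm_nonneg _) (norm_nonneg _) two_ne_zero).mp hsq)

/-- Minimizers of the optimal-control functional `I u = ‖u‖² / N (T u)²` over
the positive cone are fixed points of `T`. -/
theorem optimal_control_minimizer_is_fixed_point
    {E : Type*} [NormedAddCommGroup E] [InnerProductSpace ℝ E] [PartialOrder E]
    (hadd : ∀ x y z : E, x ≤ y → x + z ≤ y + z)
    (hsmul : ∀ (c : ℝ) (x : E), 0 ≤ x → 0 ≤ c → 0 ≤ c • x)
    (T : E → E)
    (hTle : ∀ u : E, u ≤ T u)
    (hTmin : ∀ u v : E, u ≤ v → ‖T u‖ ≤ ‖v‖)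
    (hTuniq : ∀ u m : E, u ≤ m → (∀ v : E, u ≤ v → ‖m‖ ≤ ‖v‖) → m = T u)
    (N : E → ℝ)
    (hNpos : ∀ u : E, 0 < u → 0 < N u)
    (hNmono : ∀ u v : E, 0 < u → u ≤ v → N u ≤ N v) :
    ∀ u : E, 0 < u →
      ‖u‖ ^ 2 / N (T u) ^ 2 =
          sInf {r : ℝ | ∃ v : E, 0 < v ∧ r = ‖v‖ ^ 2 / N (T v) ^ 2} →
      T u = u :=
  optimal_control_minimizer_is_fixed_point_general T hTle hTmin hTuniq N hNpos
end

section
/- Assume in addition that N is strictly monotone on the positive cone: N(u) < N(v) whenever 0 < u, u ≤ v and u ≠ v. Then for every u ∈ E with 0 < u and ‖u‖ ≠ 0: I(u) = J(u) if and only if T u = u. -/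
lemma div_sq_eq_div_sq_iff {K : Type*} [Field K] [LinearOrder K] [IsStrictOrderedRing K]
    {a x y : K} (ha : a ≠ 0) (hx : 0 < x) (hy : 0 < y) :
    a / x ^ 2 = a / y ^ 2 ↔ x = y := by
  rw [div_eq_mul_inv, div_eq_mul_inv, mul_right_inj' ha, inv_inj,
    pow_left_inj₀ hx.le hy.le two_ne_zero]

lemma apply_eq_apply_iff_of_le {E α : Type*} [Zero E] [PartialOrder E] [Preorder α] {N : E → α}
    (hNstrict : ∀ u v : E, 0 < u → u ≤ v → u ≠ v → N u < N v) {u v : E} (hu : 0 < u)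
    (huv : u ≤ v) : N u = N v ↔ u = v :=
  ⟨fun h => by_contra fun hne => (hNstrict u v hu huv hne).ne h, fun h => h ▸ rfl⟩

theorem optimal_control_eq_yamabe_iff_fixed_point_general
    {E : Type*} [NormedAddCommGroup E] [PartialOrder E]
    (T : E → E)
    (hTle : ∀ u : E, u ≤ T u)
    (N : E → ℝ)
    (hNpos : ∀ u : E, 0 < u → 0 < N u)
    (hNstrict : ∀ u v : E, 0 < u → u ≤ v → u ≠ v → N u < N v) :
    ∀ u : E, 0 < u → ‖u‖ ≠ 0 →
      (‖u‖ ^ 2 / N (T u) ^ 2 = ‖u‖ ^ 2 / N u ^ 2 ↔ T u = u) := by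
  intro u hu hnu
  rw [div_sq_eq_div_sq_iff (pow_ne_zero 2 hnu) (hNpos _ (hu.trans_le (hTle u))) (hNpos u hu),
    eq_comm, apply_eq_apply_iff_of_le hNstrict hu (hTle u), eq_comm]

/-- If `N` is strictly monotone on the positive cone, then for `u > 0` with
`‖u‖ ≠ 0`, `I u = J u` if and only if `T u = u`. -/
theorem optimal_control_eq_yamabe_iff_fixed_point
    {E : Type*} [NormedAddCommGroup E] [InnerProductSpace ℝ E] [PartialOrder E]
    (hadd : ∀ x y z : E, x ≤ y → x + z ≤ y + z)
    (hsmul : ∀ (c : ℝ) (x : E), 0 ≤ x → 0 ≤ c → 0 ≤ c • x)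
    (T : E → E)
    (hTle : ∀ u : E, u ≤ T u)
    (hTmin : ∀ u v : E, u ≤ v → ‖T u‖ ≤ ‖v‖)
    (hTuniq : ∀ u m : E, u ≤ m → (∀ v : E, u ≤ v → ‖m‖ ≤ ‖v‖) → m = T u)
    (N : E → ℝ)
    (hNpos : ∀ u : E, 0 < u → 0 < N u)
    (hNmono : ∀ u v : E, 0 < u → u ≤ v → N u ≤ N v)
    (hNstrict : ∀ u v : E, 0 < u → u ≤ v → u ≠ v → N u < N v) :
    ∀ u : E, 0 < u → ‖u‖ ≠ 0 →
      (‖u‖ ^ 2 / N (T u) ^ 2 = ‖u‖ ^ 2 / N u ^ 2 ↔ T u = u) :=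
  optimal_control_eq_yamabe_iff_fixed_point_general T hTle N hNpos hNstrict
end

section
/- The infima coincide: ⨅ {J(u) : u ∈ E, 0 < u} = ⨅ {I(u) : u ∈ E, 0 < u}. -/
/-!
Since `u ≤ T u` and `N` is monotone, `I u ≤ J u` for every positive `u`; conversely `T u` is again
positive and, `u` itself being a competitor for the obstacle problem, `J (T u) ≤ I u`.
-/

section ObstacleQuotients

variable {E : Type*} [NormedAddCommGroup E] [PartialOrder E] {T : E → E} {N : E → ℝ} {u : E}

theorem norm_sq_div_obstacle_le_norm_sq_div
    (hTle : ∀ u : E, u ≤ T u) (hNpos : ∀ u : E, 0 < u → 0 < N u)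
    (hNmono : ∀ u v : E, 0 < u → u ≤ v → N u ≤ N v) (hu : 0 < u) :
    ‖u‖ ^ 2 / N (T u) ^ 2 ≤ ‖u‖ ^ 2 / N u ^ 2 := by
  have hN : 0 < N u := hNpos u hu
  have hNT : N u ≤ N (T u) := hNmono u (T u) hu (hTle u)
  gcongr

theorem norm_obstacle_sq_div_le_norm_sq_div
    (hTmin : ∀ u v : E, u ≤ v → ‖T u‖ ≤ ‖v‖) :
    ‖T u‖ ^ 2 / N (T u) ^ 2 ≤ ‖u‖ ^ 2 / N (T u) ^ 2 := by
  gcongr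
  exact hTmin u u le_rfl

end ObstacleQuotients

theorem yamabe_infimum_eq_optimal_control_infimum_general
    {E : Type*} [NormedAddCommGroup E] [PartialOrder E]
    (T : E → E)
    (hTle : ∀ u : E, u ≤ T u)
    (hTmin : ∀ u v : E, u ≤ v → ‖T u‖ ≤ ‖v‖)
    (N : E → ℝ)
    (hNpos : ∀ u : E, 0 < u → 0 < N u)
    (hNmono : ∀ u v : E, 0 < u → u ≤ v → N u ≤ N v) :
    sInf {r : ℝ | ∃ u : E, 0 < u ∧ r = ‖u‖ ^ 2 / N u ^ 2} =
      sInf {r : ℝ | ∃ u : E, 0 < u ∧ r = ‖u‖ ^ 2 / N (T u) ^ 2} := by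
  apply csInf_eq_csInf_of_forall_exists_le
  · rintro _ ⟨u, hu, rfl⟩
    exact ⟨_, ⟨u, hu, rfl⟩, norm_sq_div_obstacle_le_norm_sq_div hTle hNpos hNmono hu⟩
  · rintro _ ⟨u, hu, rfl⟩
    exact ⟨_, ⟨T u, hu.trans_le (hTle u), rfl⟩, norm_obstacle_sq_div_le_norm_sq_div hTmin⟩

/-- The infima of `J u = ‖u‖² / N u²` and `I u = ‖u‖² / N (T u)²` over the
positive cone coincide. -/
theorem yamabe_infimum_eq_optimal_control_infimum
    {E : Type*} [NormedAddCommGroup E] [InnerProductSpace ℝ E] [PartialOrder E]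
    (hadd : ∀ x y z : E, x ≤ y → x + z ≤ y + z)
    (hsmul : ∀ (c : ℝ) (x : E), 0 ≤ x → 0 ≤ c → 0 ≤ c • x)
    (T : E → E)
    (hTle : ∀ u : E, u ≤ T u)
    (hTmin : ∀ u v : E, u ≤ v → ‖T u‖ ≤ ‖v‖)
    (hTuniq : ∀ u m : E, u ≤ m → (∀ v : E, u ≤ v → ‖m‖ ≤ ‖v‖) → m = T u)
    (N : E → ℝ)
    (hNpos : ∀ u : E, 0 < u → 0 < N u)
    (hNmono : ∀ u v : E, 0 < u → u ≤ v → N u ≤ N v) :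
    sInf {r : ℝ | ∃ u : E, 0 < u ∧ r = ‖u‖ ^ 2 / N u ^ 2} =
      sInf {r : ℝ | ∃ u : E, 0 < u ∧ r = ‖u‖ ^ 2 / N (T u) ^ 2} :=
  yamabe_infimum_eq_optimal_control_infimum_general T hTle hTmin N hNpos hNmono
end

section
/- Minimizers coincide: for every u ∈ E with 0 < u, J(u) = ⨅ {J(v) : v ∈ E, 0 < v} if and only if I(u) = ⨅ {I(v) : v ∈ E, 0 < v}. -/
/-!
Since `u ≤ T u` and `N` is monotone, `I ≤ J` on the positive cone; since `T` decreases the norm,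
`J (T v) ≤ I v`. Hence both quotients have the same infimum, and a minimizer of `J` minimizes `I`.
Conversely, if `u` minimizes `I`, then `I u ≤ J (T u) ≤ I u` forces `‖T u‖ = ‖u‖`, so `u` is itself
a solution of its obstacle problem and `u = T u` by uniqueness; then `J u = I u`.
-/

section InfOfNonneg

variable {α : Type*} {p : α → Prop} {f g : α → ℝ}

lemma sInf_setOf_exists_eq_le (hf : ∀ x, p x → 0 ≤ f x) {x : α} (hx : p x) :
    sInf {r | ∃ y, p y ∧ r = f y} ≤ f x :=
  csInf_le ⟨0, by rintro r ⟨y, hy, rfl⟩; exact hf y hy⟩ ⟨x, hx, rfl⟩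

lemma sInf_setOf_exists_eq_mono (hg : ∀ x, p x → 0 ≤ g x) (hne : ∃ x, p x)
    (h : ∀ x, p x → ∃ y, p y ∧ g y ≤ f x) :
    sInf {r | ∃ x, p x ∧ r = g x} ≤ sInf {r | ∃ x, p x ∧ r = f x} := by
  obtain ⟨x₀, hx₀⟩ := hne
  refine le_csInf ⟨f x₀, x₀, hx₀, rfl⟩ ?_
  rintro r ⟨x, hx, rfl⟩
  obtain ⟨y, hy, hyx⟩ := h x hx
  exact (sInf_setOf_exists_eq_le hg hy).trans hyx

end InfOfNonneg

section ObstacleProblem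

variable {E : Type*} [NormedAddCommGroup E] [PartialOrder E] {T : E → E} {N : E → ℝ}

lemma norm_sq_div_obstacle_le (hTle : ∀ u : E, u ≤ T u) (hNpos : ∀ u : E, 0 < u → 0 < N u)
    (hNmono : ∀ u v : E, 0 < u → u ≤ v → N u ≤ N v) (v : E) (hv : 0 < v) :
    ‖v‖ ^ 2 / N (T v) ^ 2 ≤ ‖v‖ ^ 2 / N v ^ 2 := by
  have hNv := hNpos v hv
  have hNTv := hNmono v (T v) hv (hTle v)
  gcongr

lemma norm_obstacle_sq_div_le (hTmin : ∀ u v : E, u ≤ v → ‖T u‖ ≤ ‖v‖) (v : E) :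
    ‖T v‖ ^ 2 / N (T v) ^ 2 ≤ ‖v‖ ^ 2 / N (T v) ^ 2 := by
  have := hTmin v v le_rfl
  gcongr

lemma eq_obstacle_of_norm_le (hTmin : ∀ u v : E, u ≤ v → ‖T u‖ ≤ ‖v‖)
    (hTuniq : ∀ u m : E, u ≤ m → (∀ v : E, u ≤ v → ‖m‖ ≤ ‖v‖) → m = T u) {u : E}
    (hu : ‖u‖ ≤ ‖T u‖) : u = T u :=
  hTuniq u u le_rfl fun v huv => hu.trans (hTmin u v huv)

end ObstacleProblem

theorem yamabe_minimizer_iff_optimal_control_minimizer_general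
    {E : Type*} [NormedAddCommGroup E] [PartialOrder E]
    (T : E → E)
    (hTle : ∀ u : E, u ≤ T u)
    (hTmin : ∀ u v : E, u ≤ v → ‖T u‖ ≤ ‖v‖)
    (hTuniq : ∀ u m : E, u ≤ m → (∀ v : E, u ≤ v → ‖m‖ ≤ ‖v‖) → m = T u)
    (N : E → ℝ)
    (hNpos : ∀ u : E, 0 < u → 0 < N u)
    (hNmono : ∀ u v : E, 0 < u → u ≤ v → N u ≤ N v) :
    ∀ u : E, 0 < u →
      (‖u‖ ^ 2 / N u ^ 2 = sInf {r : ℝ | ∃ v : E, 0 < v ∧ r = ‖v‖ ^ 2 / N v ^ 2} ↔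
        ‖u‖ ^ 2 / N (T u) ^ 2 =
          sInf {r : ℝ | ∃ v : E, 0 < v ∧ r = ‖v‖ ^ 2 / N (T v) ^ 2}) := by
  intro u hu
  have hTpos : ∀ v : E, 0 < v → 0 < T v := fun v hv => hv.trans_le (hTle v)
  have hIJ := norm_sq_div_obstacle_le hTle hNpos hNmono
  have hinf : sInf {r : ℝ | ∃ v : E, 0 < v ∧ r = ‖v‖ ^ 2 / N (T v) ^ 2} =
      sInf {r : ℝ | ∃ v : E, 0 < v ∧ r = ‖v‖ ^ 2 / N v ^ 2} :=
    le_antisymm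
      (sInf_setOf_exists_eq_mono (fun _ _ => by positivity) ⟨u, hu⟩ fun v hv => ⟨v, hv, hIJ v hv⟩)
      (sInf_setOf_exists_eq_mono (fun _ _ => by positivity) ⟨u, hu⟩ fun v hv =>
        ⟨T v, hTpos v hv, norm_obstacle_sq_div_le hTmin v⟩)
  constructor
  · intro hJ
    exact le_antisymm ((hIJ u hu).trans (hJ.trans hinf.symm).le)
      (sInf_setOf_exists_eq_le (fun _ _ => by positivity) hu)
  · intro hI
    have hle : ‖u‖ ^ 2 / N (T u) ^ 2 ≤ ‖T u‖ ^ 2 / N (T u) ^ 2 :=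
      (hI.trans hinf).trans_le (sInf_setOf_exists_eq_le (fun _ _ => by positivity) (hTpos u hu))
    have hNTu : 0 < N (T u) ^ 2 := pow_pos (hNpos _ (hTpos u hu)) 2
    have hfix : u = T u := eq_obstacle_of_norm_le hTmin hTuniq <|
      (pow_le_pow_iff_left₀ (norm_nonneg _) (norm_nonneg _) two_ne_zero).mp
        ((div_le_div_iff_of_pos_right hNTu).mp hle)
    rw [congrArg N hfix, hI, hinf]

/-- `u > 0` minimizes `J u = ‖u‖² / N u²` over the positive cone if and only if
it minimizes `I u = ‖u‖² / N (T u)²`. -/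
theorem yamabe_minimizer_iff_optimal_control_minimizer
    {E : Type*} [NormedAddCommGroup E] [InnerProductSpace ℝ E] [PartialOrder E]
    (hadd : ∀ x y z : E, x ≤ y → x + z ≤ y + z)
    (hsmul : ∀ (c : ℝ) (x : E), 0 ≤ x → 0 ≤ c → 0 ≤ c • x)
    (T : E → E)
    (hTle : ∀ u : E, u ≤ T u)
    (hTmin : ∀ u v : E, u ≤ v → ‖T u‖ ≤ ‖v‖)
    (hTuniq : ∀ u m : E, u ≤ m → (∀ v : E, u ≤ v → ‖m‖ ≤ ‖v‖) → m = T u)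
    (N : E → ℝ)
    (hNpos : ∀ u : E, 0 < u → 0 < N u)
    (hNmono : ∀ u v : E, 0 < u → u ≤ v → N u ≤ N v) :
    ∀ u : E, 0 < u →
      (‖u‖ ^ 2 / N u ^ 2 = sInf {r : ℝ | ∃ v : E, 0 < v ∧ r = ‖v‖ ^ 2 / N v ^ 2} ↔
        ‖u‖ ^ 2 / N (T u) ^ 2 =
          sInf {r : ℝ | ∃ v : E, 0 < v ∧ r = ‖v‖ ^ 2 / N (T v) ^ 2}) :=
  yamabe_minimizer_iff_optimal_control_minimizer_general T hTle hTmin hTuniq N hNpos hNmono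
end
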